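/- Let Φ(iy) = Im A₊(iy) where A₊(iy) = −i(iy−3)² ∫₀¹ √(3s+iy) dμ(s) with dμ(s) = √(s(1−s²))/(1+s)⁴ ds, y > 0. Then Φ(3i-value) i.e. Φ at y=3 is strictly negative, namely Im A₊(3i) = −18∫₀¹ Im√(3s+3i) dμ(s) < 0, while Φ(iy) → +∞ as y → +∞ (Φ(iy) ∼ (√2/2) y^{5/2} ∫₀¹ dμ(s)). Hence there exists y* > 3 with Φ(iy*) = 0. -/

import Mathlib

/-!
For `y > 0` the factorisation `3s + iy = y (3s/y + i)` gives `A₊(iy) = y^{5/2} B(3/y)` with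
`B(t) = −i(i − t)² ∫₀¹ (ts + i)^{1/2} dμ(s)`, and `B` is continuous on all of `ℝ` because
`ts + i` never meets the branch cut. Hence `Φ` is continuous on `y > 0` and
`Φ(iy) / y^{5/2} → Im B(0) = Re(i^{1/2}) ∫₀¹ dμ = (√2/2) ∫₀¹ dμ > 0`. At `y = 3` the prefactor
`−i(3i − 3)²` equals `−18`, while `Im √z > 0` for `Im z > 0`, so `Φ(3i) < 0`; the intermediate
value theorem then produces the zero.
-/

open Complex Filter Topology

/-- `A₊(iy) = −i(iy−3)² ∫₀¹ √(3s+iy) dμ(s)`, `dμ(s) = √(s(1−s²))/(1+s)⁴ ds`. -/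
noncomputable def AplusI (y : ℝ) : ℂ :=
  -Complex.I * (Complex.I * (y : ℂ) - 3) ^ 2 *
    ∫ s in (0:ℝ)..1,
      ((3 * (s : ℂ)) + Complex.I * (y : ℂ)) ^ ((1 : ℂ) / 2) *
        ((Real.sqrt (s * (1 - s ^ 2)) / (1 + s) ^ 4 : ℝ) : ℂ)

open MeasureTheory Set intervalIntegral

theorem Complex.ofReal_mul_cpow {r : ℝ} (hr : 0 < r) (z w : ℂ) :
    ((r : ℂ) * z) ^ w = (r : ℂ) ^ w * z ^ w := by
  rcases eq_or_ne z 0 with rfl | hz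
  · rcases eq_or_ne w 0 with rfl | hw
    · simp
    · simp [Complex.zero_cpow hw]
  have hr' : (r : ℂ) ≠ 0 := Complex.ofReal_ne_zero.mpr hr.ne'
  rw [Complex.cpow_def_of_ne_zero (mul_ne_zero hr' hz), Complex.log_ofReal_mul hr hz,
    Complex.cpow_def_of_ne_zero hr', Complex.cpow_def_of_ne_zero hz, ← Complex.exp_add,
    Complex.ofReal_log hr.le, add_mul]

theorem Complex.im_cpow_one_half_pos {z : ℂ} (hz : 0 < z.im) : 0 < (z ^ (1 / 2 : ℂ)).im := by
  rw [one_div, Complex.cpow_inv_two_im_eq_sqrt hz.le]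
  have := (Complex.abs_re_lt_norm.mpr hz.ne').trans_le' (le_abs_self z.re)
  exact Real.sqrt_pos.mpr (by linarith)

theorem Complex.re_I_cpow_one_half : (I ^ (1 / 2 : ℂ)).re = √2 / 2 := by
  rw [one_div, Complex.cpow_inv_two_re,
    Real.sqrt_eq_iff_mul_self_eq (by simp) (by positivity)]
  ring_nf
  norm_num

theorem Continuous.cpow_const_of_im_ne_zero {X : Type*} [TopologicalSpace X] {f : X → ℂ}
    (hf : Continuous f) (h : ∀ x, (f x).im ≠ 0) (w : ℂ) : Continuous fun x => f x ^ w :=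
  hf.cpow continuous_const fun x => Complex.mem_slitPlane_iff.mpr (Or.inr (h x))

theorem im_intervalIntegral_mul_ofReal {f : ℝ → ℂ} {w : ℝ → ℝ} {a b : ℝ}
    (hf : IntervalIntegrable (fun s => f s * w s) volume a b) :
    (∫ s in a..b, f s * w s).im = ∫ s in a..b, (f s).im * w s := by
  simp_rw [← Complex.im_mul_ofReal]
  exact (intervalIntegral_im hf).symm

theorem exists_gt_eq_zero_of_neg_of_eventually_pos {f : ℝ → ℝ} {a : ℝ}
    (hf : ContinuousOn f (Ici a)) (ha : f a < 0) (hpos : ∀ᶠ x in atTop, 0 < f x) :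
    ∃ x, a < x ∧ f x = 0 := by
  obtain ⟨b, hb, hab⟩ := (hpos.and (eventually_gt_atTop a)).exists
  obtain ⟨x, hx, hfx⟩ := intermediate_value_Ioo hab.le (hf.mono Icc_subset_Ici_self) ⟨ha, hb⟩
  exact ⟨x, hx.1, hfx⟩

noncomputable def muDensity (s : ℝ) : ℝ := √(s * (1 - s ^ 2)) / (1 + s) ^ 4

theorem continuousOn_muDensity : ContinuousOn muDensity (Ici 0) :=
  (Real.continuous_sqrt.comp (by fun_prop)).continuousOn.div (by fun_prop)
    fun s (hs : 0 ≤ s) => by positivity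

theorem muDensity_pos {s : ℝ} (hs : s ∈ Ioo (0 : ℝ) 1) : 0 < muDensity s := by
  have : 0 < s * (1 - s ^ 2) := by nlinarith [hs.1, hs.2]
  exact div_pos (Real.sqrt_pos.mpr this) (by nlinarith [hs.1])

theorem integral_muDensity_pos : 0 < ∫ s in (0 : ℝ)..1, muDensity s :=
  intervalIntegral_pos_of_pos_on
    ((continuousOn_muDensity.mono Icc_subset_Ici_self).intervalIntegrable_of_Icc zero_le_one)
    (fun _ hs => muDensity_pos hs) one_pos

noncomputable def rootTransform (w : ℝ → ℝ) (t : ℝ) : ℂ :=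
  ∫ s in (0 : ℝ)..1, (((t * s : ℝ) : ℂ) + I) ^ (1 / 2 : ℂ) * w s

theorem rootTransform_congr {w w' : ℝ → ℝ} (h : EqOn w w' (Icc 0 1)) :
    rootTransform w = rootTransform w' := by
  funext t
  refine integral_congr fun s hs => ?_
  rw [uIcc_of_le zero_le_one] at hs
  simp only [h hs]

theorem continuous_rootTransform {w : ℝ → ℝ} (hw : Continuous w) :
    Continuous (rootTransform w) :=
  continuous_parametric_intervalIntegral_of_continuous'
    (((by fun_prop : Continuous fun p : ℝ × ℝ => ((p.1 * p.2 : ℝ) : ℂ) + I)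
      |>.cpow_const_of_im_ne_zero (by simp) _).mul
      (Complex.continuous_ofReal.comp (hw.comp continuous_snd))) 0 1

theorem rootTransform_zero (w : ℝ → ℝ) :
    rootTransform w 0 = I ^ (1 / 2 : ℂ) * ((∫ s in (0 : ℝ)..1, w s : ℝ) : ℂ) := by
  simp [rootTransform, integral_ofReal]

theorem integral_cpow_eq_sqrt_mul_rootTransform (w : ℝ → ℝ) (c : ℝ) {y : ℝ} (hy : 0 < y) :
    ∫ s in (0 : ℝ)..1, ((c : ℂ) * s + I * y) ^ (1 / 2 : ℂ) * w s =
      √y * rootTransform w (c / y) := by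
  rw [rootTransform, ← intervalIntegral.integral_const_mul]
  refine integral_congr fun s _ => ?_
  have hbase : (c : ℂ) * s + I * y = (y : ℂ) * (((c / y * s : ℝ) : ℂ) + I) := by
    push_cast
    field_simp [Complex.ofReal_ne_zero.mpr hy.ne']
  rw [hbase, Complex.ofReal_mul_cpow hy, Real.sqrt_eq_rpow, Complex.ofReal_cpow hy.le]
  push_cast
  ring

theorem continuous_rootTransform_muDensity : Continuous (rootTransform muDensity) := by
  -- `muDensity` is discontinuous at `-1` (junk value of `/ 0`), so pass to `muDensity ∘ max 0`.
  have hmax : Continuous fun s => muDensity (max s 0) :=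
    continuousOn_muDensity.comp_continuous (by fun_prop) fun s => le_max_right s 0
  rw [rootTransform_congr (w' := fun s => muDensity (max s 0)) fun s hs => by
    simp only [max_eq_left hs.1]]
  exact continuous_rootTransform hmax

noncomputable def scaledAplus (t : ℝ) : ℂ := -I * (I - t) ^ 2 * rootTransform muDensity t

theorem AplusI_eq_rpow_mul_scaledAplus {y : ℝ} (hy : 0 < y) :
    AplusI y = ((y ^ (5 / 2 : ℝ) : ℝ) : ℂ) * scaledAplus (3 / y) := by
  have hunfold : AplusI y = -I * (I * y - 3) ^ 2 *
      ∫ s in (0 : ℝ)..1, (((3 : ℝ) : ℂ) * s + I * y) ^ (1 / 2 : ℂ) * muDensity s := by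
    rw [Complex.ofReal_ofNat]; rfl
  have hpow : y ^ (5 / 2 : ℝ) = y ^ 2 * √y := by
    rw [Real.sqrt_eq_rpow, ← Real.rpow_natCast, ← Real.rpow_add hy]
    norm_num
  rw [hunfold, integral_cpow_eq_sqrt_mul_rootTransform _ _ hy, scaledAplus, hpow]
  push_cast
  field_simp [Complex.ofReal_ne_zero.mpr hy.ne']

theorem continuous_scaledAplus : Continuous scaledAplus := by
  have := continuous_rootTransform_muDensity
  unfold scaledAplus
  fun_prop

theorem continuousOn_AplusI : ContinuousOn AplusI (Ioi 0) := by
  refine ContinuousOn.congr ?_ fun y (hy : 0 < y) => AplusI_eq_rpow_mul_scaledAplus hy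
  refine ContinuousOn.mul ?_ (continuous_scaledAplus.comp_continuousOn ?_)
  · exact (Complex.continuous_ofReal.comp (Real.continuous_rpow_const (by norm_num))).continuousOn
  · exact continuousOn_const.div continuousOn_id fun y (hy : 0 < y) => hy.ne'

theorem tendsto_im_AplusI_div_rpow :
    Tendsto (fun y => (AplusI y).im / y ^ (5 / 2 : ℝ)) atTop
      (𝓝 (√2 / 2 * ∫ s in (0 : ℝ)..1, muDensity s)) := by
  have hlim : (scaledAplus 0).im = √2 / 2 * ∫ s in (0 : ℝ)..1, muDensity s := by
    have hprefactor : -I * (I - ((0 : ℝ) : ℂ)) ^ 2 = I := by simp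
    rw [scaledAplus, rootTransform_zero, ← mul_assoc, Complex.im_mul_ofReal, hprefactor,
      Complex.I_mul_im, Complex.re_I_cpow_one_half]
  have h3y : Tendsto (fun y : ℝ => 3 / y) atTop (𝓝 0) :=
    tendsto_const_nhds.div_atTop tendsto_id
  rw [← hlim]
  refine ((Complex.continuous_im.comp continuous_scaledAplus).tendsto 0 |>.comp h3y).congr' ?_
  filter_upwards [eventually_gt_atTop 0] with y hy
  rw [AplusI_eq_rpow_mul_scaledAplus hy, Complex.im_ofReal_mul,
    mul_div_cancel_left₀ _ (Real.rpow_pos_of_pos hy _).ne']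
  rfl

theorem AplusI_three :
    AplusI 3 = -18 * ∫ s in (0 : ℝ)..1, (3 * (s : ℂ) + 3 * I) ^ (1 / 2 : ℂ) * muDensity s := by
  have h : -I * (I * 3 - 3) ^ 2 = (-18 : ℂ) := by
    ring_nf
    simp
  rw [AplusI, Complex.ofReal_ofNat, h, mul_comm I 3]
  rfl

theorem continuous_cpow_one_half_three_mul_add_three_I :
    Continuous fun s : ℝ => (3 * (s : ℂ) + 3 * I) ^ (1 / 2 : ℂ) :=
  (by fun_prop : Continuous fun s : ℝ => 3 * (s : ℂ) + 3 * I).cpow_const_of_im_ne_zero (by simp) _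

theorem im_AplusI_three :
    (AplusI 3).im =
      -18 * ∫ s in (0 : ℝ)..1, ((3 * (s : ℂ) + 3 * I) ^ (1 / 2 : ℂ)).im * muDensity s := by
  have hcont : ContinuousOn
      (fun s : ℝ => (3 * (s : ℂ) + 3 * I) ^ (1 / 2 : ℂ) * muDensity s) (Icc 0 1) :=
    continuous_cpow_one_half_three_mul_add_three_I.continuousOn.mul
      (Complex.continuous_ofReal.comp_continuousOn (continuousOn_muDensity.mono Icc_subset_Ici_self))
  rw [AplusI_three, ← im_intervalIntegral_mul_ofReal (hcont.intervalIntegrable_of_Icc zero_le_one)]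
  simp [Complex.mul_im]

theorem integral_im_cpow_one_half_mul_muDensity_pos :
    0 < ∫ s in (0 : ℝ)..1, ((3 * (s : ℂ) + 3 * I) ^ (1 / 2 : ℂ)).im * muDensity s := by
  refine intervalIntegral_pos_of_pos_on ?_ (fun s hs => mul_pos ?_ (muDensity_pos hs)) one_pos
  · have hcont := Complex.continuous_im.comp continuous_cpow_one_half_three_mul_add_three_I
    exact (hcont.continuousOn.mul (continuousOn_muDensity.mono Icc_subset_Ici_self))
      |>.intervalIntegrable_of_Icc zero_le_one
  · exact Complex.im_cpow_one_half_pos (by simp)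

/-- `Φ(iy) = Im A₊(iy)` satisfies: at `y = 3`,
`Im A₊(3i) = −18 ∫₀¹ Im √(3s+3i) dμ(s) < 0`; as `y → +∞`,
`Φ(iy) ∼ (√2/2) y^{5/2} ∫₀¹ dμ(s)`; hence there exists `y* > 3` with `Φ(iy*) = 0`. -/
theorem Phi_sign_change_and_zero :
    (AplusI 3).im =
      -18 * ∫ s in (0:ℝ)..1,
        (((3 * (s : ℂ)) + 3 * Complex.I) ^ ((1 : ℂ) / 2)).im *
          (Real.sqrt (s * (1 - s ^ 2)) / (1 + s) ^ 4) ∧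
    (AplusI 3).im < 0 ∧
    Tendsto (fun y : ℝ => (AplusI y).im / y ^ ((5 : ℝ) / 2)) atTop
      (nhds (Real.sqrt 2 / 2 *
        ∫ s in (0:ℝ)..1, Real.sqrt (s * (1 - s ^ 2)) / (1 + s) ^ 4)) ∧
    (∃ y : ℝ, 3 < y ∧ (AplusI y).im = 0) := by
  have hneg : (AplusI 3).im < 0 := by
    rw [im_AplusI_three]
    linarith [integral_im_cpow_one_half_mul_muDensity_pos]
  have hpos : ∀ᶠ y in atTop, 0 < (AplusI y).im := by
    filter_upwards [tendsto_im_AplusI_div_rpow.eventually_const_lt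
      (mul_pos (by positivity) integral_muDensity_pos), eventually_gt_atTop 0] with y hy hy0
    exact (div_pos_iff_of_pos_right (Real.rpow_pos_of_pos hy0 _)).mp hy
  refine ⟨im_AplusI_three, hneg, tendsto_im_AplusI_div_rpow, ?_⟩
  refine exists_gt_eq_zero_of_neg_of_eventually_pos ?_ hneg hpos
  exact (Complex.continuous_im.comp_continuousOn continuousOn_AplusI).mono
    fun y (hy : 3 ≤ y) => show (0 : ℝ) < y by linarith
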